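/- Let f₁, f₂, f₃, f₄ : [0,∞) → ℂ be integrable functions, each satisfying f_j(x) = O(x^ν) as x → 0⁺ for some ν > −1, and suppose their half-line Fourier transforms F_j(α) = ∫₀^∞ f_j(x) e^{iαx} dx satisfy F₁(α₂) + F₂(α₁) + α₁·F₃(α₂) + α₂·F₄(α₁) = 0 for all real α₁, α₂. Then f₁ = f₂ = f₃ = f₄ = 0 almost everywhere. -/

import Mathlib

set_option maxHeartbeats 1000000
open scoped ContDiff
open Complex Filter Topology MeasureTheory Set Asymptotics FourierTransform RealInnerProductSpace

section helpers

/-- A smooth compactly supported complex-valued function is a Schwartz map. -/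
noncomputable def toSchwartz (ψ : ℝ → ℂ) (hψ : ContDiff ℝ ∞ ψ) (hc : HasCompactSupport ψ) :
    SchwartzMap ℝ ℂ where
  toFun := ψ
  smooth' := hψ
  decay' := by
    intro k n
    have h1 : HasCompactSupport (iteratedFDeriv ℝ n ψ) := hc.iteratedFDeriv n
    have h2 : Continuous fun x : ℝ => ‖x‖ ^ k * ‖iteratedFDeriv ℝ n ψ x‖ := by
      exact (continuous_norm.pow k).mul
        (hψ.continuous_iteratedFDeriv (by exact_mod_cast le_top)).norm
    have h3 : HasCompactSupport fun x : ℝ => ‖x‖ ^ k * ‖iteratedFDeriv ℝ n ψ x‖ :=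
      (h1.norm).mul_left
    obtain ⟨C, hC⟩ := h2.bounded_above_of_compact_support h3
    exact ⟨C, fun x => (Real.le_norm_self _).trans (hC x)⟩

lemma fourier_inj {g : ℝ → ℂ} (hg : Integrable g) (h : ∀ ξ : ℝ, 𝓕 g ξ = 0) :
    ∀ᵐ x : ℝ, g x = 0 := by
  apply ae_eq_zero_of_integral_contDiff_smul_eq_zero hg.locallyIntegrable
  intro ψ hψ hψc
  set ψC : ℝ → ℂ := fun x => (ψ x : ℂ) with hψCdef
  have hψC : ContDiff ℝ ∞ ψC := Complex.ofRealCLM.contDiff.comp hψ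
  have hcs : HasCompactSupport ψC := hψc.comp_left (g := Complex.ofReal) Complex.ofReal_zero
  set ψS : SchwartzMap ℝ ℂ := toSchwartz ψC hψC hcs with hψSdef
  set φ : SchwartzMap ℝ ℂ := (SchwartzMap.fourierTransformCLE ℂ (SchwartzMap ℝ ℂ) (F := SchwartzMap ℝ ℂ)).symm ψS with hφdef
  have hFφ : 𝓕 (⇑φ) = ⇑ψS := by
    have := (SchwartzMap.fourierTransformCLE ℂ (SchwartzMap ℝ ℂ) (F := SchwartzMap ℝ ℂ)).apply_symm_apply ψS
    rw [← this]
    rfl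
  have hflip := VectorFourier.integral_fourierIntegral_smul_eq_flip
    (L := innerₗ ℝ) (μ := volume) (ν := (volume : Measure ℝ))
    Real.continuous_fourierChar continuous_inner hg φ.integrable
  have hLflip : (innerₗ ℝ).flip = innerₗ ℝ :=
    LinearMap.ext fun x => LinearMap.ext fun y => real_inner_comm x y
  rw [hLflip] at hflip
  have hL : (fun ξ => VectorFourier.fourierIntegral 𝐞 volume (innerₗ ℝ) g ξ • φ ξ)
      = fun ξ => (0 : ℂ) := by
    funext ξ
    have : VectorFourier.fourierIntegral 𝐞 volume (innerₗ ℝ) g ξ = 𝓕 g ξ := rfl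
    rw [this, h ξ, zero_smul]
  rw [hL] at hflip
  simp only [integral_zero] at hflip
  have hR : (fun x => g x • VectorFourier.fourierIntegral 𝐞 volume (innerₗ ℝ) (⇑φ) x)
      = fun x => g x * ψC x := by
    funext x
    have : VectorFourier.fourierIntegral 𝐞 volume (innerₗ ℝ) (⇑φ) x = 𝓕 (⇑φ) x := rfl
    rw [this, hFφ]
    rfl
  rw [hR] at hflip
  have : (fun x => ψ x • g x) = fun x => g x * ψC x := by
    funext x
    simp [ψC, real_smul, mul_comm]
  rw [this, ← hflip]

lemma affine_zero {c d : ℂ} (h : Tendsto (fun α : ℝ => c + (α : ℂ) * d) atTop (𝓝 0)) :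
    c = 0 ∧ d = 0 := by
  have hmap : Tendsto (fun α : ℝ => α + 1) atTop atTop :=
    tendsto_atTop_add_const_right atTop 1 tendsto_id
  have h1 : Tendsto (fun α : ℝ => c + ((α + 1 : ℝ) : ℂ) * d) atTop (𝓝 0) := h.comp hmap
  have h2 := h1.sub h
  have he : (fun α : ℝ => (c + ((α + 1 : ℝ) : ℂ) * d) - (c + (α : ℂ) * d)) = fun _ => d := by
    funext α; push_cast; ring
  rw [he, sub_zero] at h2
  have hd : d = 0 := tendsto_nhds_unique tendsto_const_nhds h2
  simp only [hd, mul_zero, add_zero] at h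
  exact ⟨tendsto_nhds_unique tendsto_const_nhds h, hd⟩

lemma fourier_eq_exp (g : ℝ → ℂ) (ξ : ℝ) :
    𝓕 g ξ = ∫ x : ℝ, g x * Complex.exp (Complex.I * ((-2 * Real.pi * ξ : ℝ) : ℂ) * x) := by
  rw [Real.fourier_real_eq_integral_exp_smul]
  refine integral_congr_ae (Eventually.of_forall fun v => ?_)
  show Complex.exp (((-2 * Real.pi * v * ξ : ℝ) : ℂ) * Complex.I) • g v = _
  rw [smul_eq_mul, mul_comm]
  congr 1
  push_cast
  ring

lemma transform_tendsto {g : ℝ → ℂ} (hg : Integrable g) :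
    Tendsto (fun α : ℝ => ∫ x : ℝ, g x * Complex.exp (Complex.I * (α : ℂ) * x))
      atTop (𝓝 0) := by
  have RL := Real.zero_at_infty_fourier g
  have t1 : Tendsto (fun α : ℝ => -(α / (2 * Real.pi))) atTop atBot := by
    apply tendsto_neg_atTop_atBot.comp
    exact tendsto_id.atTop_div_const (by positivity)
  have t2 : Tendsto (fun α : ℝ => 𝓕 g (-(α / (2 * Real.pi)))) atTop (𝓝 0) :=
    RL.comp (t1.mono_right atBot_le_cocompact)
  apply t2.congr
  intro α
  rw [fourier_eq_exp]
  have : (-2 * Real.pi * -(α / (2 * Real.pi)) : ℝ) = α := by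
    field_simp
  rw [this]

lemma indic_mul (f e : ℝ → ℂ) :
    (∫ x in Set.Ioi (0 : ℝ), f x * e x) = ∫ x : ℝ, (Set.Ioi (0 : ℝ)).indicator f x * e x := by
  rw [← integral_indicator measurableSet_Ioi]
  congr 1
  funext x
  by_cases hx : x ∈ Set.Ioi (0 : ℝ) <;> simp [hx]

/-- Tendsto of the half-line transform. -/
lemma halfline_tendsto {f : ℝ → ℂ} (hf : IntegrableOn f (Set.Ioi 0)) :
    Tendsto (fun α : ℝ => ∫ x in Set.Ioi (0 : ℝ),
      f x * Complex.exp (Complex.I * (α : ℂ) * x)) atTop (𝓝 0) := by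
  have hg : Integrable ((Set.Ioi (0 : ℝ)).indicator f) :=
    (integrable_indicator_iff measurableSet_Ioi).2 hf
  have := transform_tendsto hg
  apply this.congr
  intro α
  exact (indic_mul f _).symm

/-- Vanishing of all half-line transforms implies a.e. vanishing. -/
lemma halfline_inj {f : ℝ → ℂ} (hf : IntegrableOn f (Set.Ioi 0))
    (h : ∀ α : ℝ, (∫ x in Set.Ioi (0 : ℝ),
      f x * Complex.exp (Complex.I * (α : ℂ) * x)) = 0) :
    ∀ᵐ x ∂(volume.restrict (Set.Ioi (0 : ℝ))), f x = 0 := by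
  have hg : Integrable ((Set.Ioi (0 : ℝ)).indicator f) :=
    (integrable_indicator_iff measurableSet_Ioi).2 hf
  have h0 : ∀ ξ : ℝ, 𝓕 ((Set.Ioi (0 : ℝ)).indicator f) ξ = 0 := by
    intro ξ
    rw [fourier_eq_exp, ← indic_mul]
    exact h _
  have := fourier_inj hg h0
  have h1 : ∀ᵐ x ∂(volume.restrict (Set.Ioi (0 : ℝ))),
      (Set.Ioi (0 : ℝ)).indicator f x = 0 := ae_restrict_of_ae this
  filter_upwards [h1, ae_restrict_mem measurableSet_Ioi] with x hx hmem
  rwa [Set.indicator_of_mem hmem] at hx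

end helpers

/-- Uniqueness theorem: if four integrable functions on `[0,∞)`, each `O(x^ν)` at `0⁺` for
some `ν > -1`, have half-line Fourier transforms satisfying
`F₁(α₂) + F₂(α₁) + α₁ F₃(α₂) + α₂ F₄(α₁) = 0` for all real `α₁, α₂`, then all four
functions vanish almost everywhere on `(0,∞)`. -/
theorem interface_uniqueness (f₁ f₂ f₃ f₄ : ℝ → ℂ)
    (hi₁ : IntegrableOn f₁ (Set.Ioi 0)) (hi₂ : IntegrableOn f₂ (Set.Ioi 0))
    (hi₃ : IntegrableOn f₃ (Set.Ioi 0)) (hi₄ : IntegrableOn f₄ (Set.Ioi 0))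
    (ν₁ ν₂ ν₃ ν₄ : ℝ) (hν₁ : -1 < ν₁) (hν₂ : -1 < ν₂) (hν₃ : -1 < ν₃) (hν₄ : -1 < ν₄)
    (hO₁ : f₁ =O[𝓝[>] (0 : ℝ)] fun x : ℝ => x ^ ν₁)
    (hO₂ : f₂ =O[𝓝[>] (0 : ℝ)] fun x : ℝ => x ^ ν₂)
    (hO₃ : f₃ =O[𝓝[>] (0 : ℝ)] fun x : ℝ => x ^ ν₃)
    (hO₄ : f₄ =O[𝓝[>] (0 : ℝ)] fun x : ℝ => x ^ ν₄)
    (hzero : ∀ α₁ α₂ : ℝ,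
      (∫ x in Set.Ioi (0 : ℝ), f₁ x * Complex.exp (Complex.I * (α₂ : ℂ) * (x : ℂ))) +
      (∫ x in Set.Ioi (0 : ℝ), f₂ x * Complex.exp (Complex.I * (α₁ : ℂ) * (x : ℂ))) +
      (α₁ : ℂ) * (∫ x in Set.Ioi (0 : ℝ), f₃ x * Complex.exp (Complex.I * (α₂ : ℂ) * (x : ℂ))) +
      (α₂ : ℂ) * (∫ x in Set.Ioi (0 : ℝ), f₄ x * Complex.exp (Complex.I * (α₁ : ℂ) * (x : ℂ))) = 0) :
    (∀ᵐ x ∂(volume.restrict (Set.Ioi (0 : ℝ))), f₁ x = 0) ∧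
    (∀ᵐ x ∂(volume.restrict (Set.Ioi (0 : ℝ))), f₂ x = 0) ∧
    (∀ᵐ x ∂(volume.restrict (Set.Ioi (0 : ℝ))), f₃ x = 0) ∧
    (∀ᵐ x ∂(volume.restrict (Set.Ioi (0 : ℝ))), f₄ x = 0) := by
  set F₁ : ℝ → ℂ := fun α => ∫ x in Set.Ioi (0 : ℝ),
    f₁ x * Complex.exp (Complex.I * (α : ℂ) * (x : ℂ)) with hF₁def
  set F₂ : ℝ → ℂ := fun α => ∫ x in Set.Ioi (0 : ℝ),
    f₂ x * Complex.exp (Complex.I * (α : ℂ) * (x : ℂ)) with hF₂def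
  set F₃ : ℝ → ℂ := fun α => ∫ x in Set.Ioi (0 : ℝ),
    f₃ x * Complex.exp (Complex.I * (α : ℂ) * (x : ℂ)) with hF₃def
  set F₄ : ℝ → ℂ := fun α => ∫ x in Set.Ioi (0 : ℝ),
    f₄ x * Complex.exp (Complex.I * (α : ℂ) * (x : ℂ)) with hF₄def
  have hz : ∀ α₁ α₂ : ℝ, F₁ α₂ + F₂ α₁ + (α₁ : ℂ) * F₃ α₂ + (α₂ : ℂ) * F₄ α₁ = 0 := hzero
  have hT₁ : Tendsto F₁ atTop (𝓝 0) := halfline_tendsto hi₁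
  have hT₂ : Tendsto F₂ atTop (𝓝 0) := halfline_tendsto hi₂
  have hT₃ : Tendsto F₃ atTop (𝓝 0) := halfline_tendsto hi₃
  -- Step 1: α₂ = 0
  have step1 : ∀ α₁ : ℝ, F₂ α₁ = -(F₁ 0) + (α₁ : ℂ) * (-(F₃ 0)) := by
    intro α₁
    have h := hz α₁ 0
    push_cast at h
    linear_combination h
  have step1' : Tendsto (fun α : ℝ => -(F₁ 0) + (α : ℂ) * (-(F₃ 0))) atTop (𝓝 0) :=
    hT₂.congr step1
  obtain ⟨e1, e3⟩ := affine_zero step1'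
  have hF10 : F₁ 0 = 0 := by simpa using e1
  have hF30 : F₃ 0 = 0 := by simpa using e3
  have hF₂ : ∀ α : ℝ, F₂ α = 0 := by
    intro α; rw [step1 α, hF10, hF30]; ring
  -- Step 2: α₁ = 0
  have step2 : ∀ α₂ : ℝ, F₁ α₂ = 0 + (α₂ : ℂ) * (-(F₄ 0)) := by
    intro α₂
    have h := hz 0 α₂
    rw [hF₂ 0] at h
    push_cast at h
    linear_combination h
  obtain ⟨-, e4⟩ := affine_zero (hT₁.congr step2)
  have hF40 : F₄ 0 = 0 := by simpa using e4
  have hF₁ : ∀ α : ℝ, F₁ α = 0 := by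
    intro α; rw [step2 α, hF40]; ring
  -- Step 3: α₁ = 1
  have step3 : ∀ α₂ : ℝ, F₃ α₂ = 0 + (α₂ : ℂ) * (-(F₄ 1)) := by
    intro α₂
    have h := hz 1 α₂
    rw [hF₂ 1, hF₁ α₂] at h
    push_cast at h
    linear_combination h
  obtain ⟨-, e4'⟩ := affine_zero (hT₃.congr step3)
  have hF41 : F₄ 1 = 0 := by simpa using e4'
  have hF₃ : ∀ α : ℝ, F₃ α = 0 := by
    intro α; rw [step3 α, hF41]; ring
  -- Step 4: α₂ = 1
  have hF₄ : ∀ α : ℝ, F₄ α = 0 := by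
    intro α
    have h := hz α 1
    rw [hF₁ 1, hF₂ α, hF₃ 1] at h
    push_cast at h
    linear_combination h
  exact ⟨halfline_inj hi₁ hF₁, halfline_inj hi₂ hF₂, halfline_inj hi₃ hF₃, halfline_inj hi₄ hF₄⟩
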